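/- Let g, s ∈ R^n with g ≠ 0 and s ≠ 0, H ∈ R^{2×2} symmetric with 0 < ĉ1 ≤ λ_min(H) ≤ λ_max(H) ≤ ĉ2, (α, β) = H⁻¹ (‖g‖², −gᵀs)ᵀ, and d = −α g + β s. Then ‖d‖ ≥ (1/ĉ2)‖g‖³ and ‖d‖ ≤ (1/ĉ1)(‖g‖ + ‖s‖)(‖g‖² + |gᵀs|). -/

import Mathlib

open Matrix WithLp
open scoped InnerProductSpace

/-!
Put `w = (α, β)` and `v = (‖g‖², -gᵀs)`, so that `H w = v` and `gᵀd = -wᵀv = -wᵀHw`.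
Cauchy–Schwarz for the form of `H` gives `(vᵀv)² = (vᵀHw)² ≤ (vᵀHv)(wᵀHw) ≤ c₂ (vᵀv)(wᵀv)`,
hence `‖g‖⁴ ≤ vᵀv ≤ -c₂ gᵀd ≤ c₂ ‖g‖ ‖d‖`. Coercivity gives `c₁ ‖w‖² ≤ wᵀHw = wᵀv ≤ ‖w‖ ‖v‖`,
so `|α|, |β| ≤ ‖w‖ ≤ ‖v‖ / c₁ ≤ (‖g‖² + |gᵀs|) / c₁`, and `‖d‖ ≤ |α| ‖g‖ + |β| ‖s‖`.
-/

lemma norm_smul_add_smul_le {E : Type*} [SeminormedAddCommGroup E] [NormedSpace ℝ E]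
    (a b : ℝ) (x y : E) : ‖a • x + b • y‖ ≤ |a| * ‖x‖ + |b| * ‖y‖ := by
  refine (norm_add_le _ _).trans_eq ?_
  rw [norm_smul, norm_smul, Real.norm_eq_abs, Real.norm_eq_abs]

lemma norm_pow_three_le_of_pow_four_le_neg_inner {E : Type*} [NormedAddCommGroup E]
    [InnerProductSpace ℝ E] {g d : E} {c : ℝ} (hg : g ≠ 0) (hc : 0 ≤ c)
    (h : ‖g‖ ^ 4 ≤ c * -⟪g, d⟫_ℝ) : ‖g‖ ^ 3 ≤ c * ‖d‖ := by
  have hcs : -⟪g, d⟫_ℝ ≤ ‖g‖ * ‖d‖ := (neg_le_abs _).trans (abs_real_inner_le_norm _ _)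
  refine le_of_mul_le_mul_left ?_ (norm_pos_iff.mpr hg)
  calc ‖g‖ * ‖g‖ ^ 3 = ‖g‖ ^ 4 := by ring
    _ ≤ c * (‖g‖ * ‖d‖) := h.trans (mul_le_mul_of_nonneg_left hcs hc)
    _ = ‖g‖ * (c * ‖d‖) := by ring

namespace Matrix

variable {ι : Type*} [Fintype ι]

lemma dotProduct_eq_inner_toLp (x y : ι → ℝ) : x ⬝ᵥ y = ⟪toLp 2 x, toLp 2 y⟫_ℝ := by
  rw [EuclideanSpace.inner_toLp_toLp, star_trivial, dotProduct_comm]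

lemma sqrt_dotProduct_self_eq_norm (x : ι → ℝ) : √(x ⬝ᵥ x) = ‖toLp 2 x‖ := by
  rw [norm_eq_sqrt_real_inner, dotProduct_eq_inner_toLp]

lemma dotProduct_self_nonneg (x : ι → ℝ) : 0 ≤ x ⬝ᵥ x := by
  simpa using dotProduct_self_star_nonneg x

lemma sq_le_dotProduct_self (x : ι → ℝ) (i : ι) : x i ^ 2 ≤ x ⬝ᵥ x := by
  simpa only [dotProduct, sq] using
    Finset.single_le_sum (fun j _ ↦ mul_self_nonneg (x j)) (Finset.mem_univ i)

lemma sqrt_dotProduct_self_le_sum_abs (x : ι → ℝ) : √(x ⬝ᵥ x) ≤ ∑ i, |x i| := by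
  refine Real.sqrt_le_iff.mpr ⟨by positivity, ?_⟩
  calc x ⬝ᵥ x = ∑ i, |x i| ^ 2 := by simp_rw [sq_abs, sq]; rfl
    _ ≤ (∑ i, |x i|) ^ 2 := Finset.sum_sq_le_sq_sum_of_nonneg fun i _ ↦ abs_nonneg (x i)

variable {H : Matrix ι ι ℝ}

lemma IsSymm.dotProduct_mulVec_comm (hH : H.IsSymm) (x y : ι → ℝ) :
    x ⬝ᵥ (H *ᵥ y) = y ⬝ᵥ (H *ᵥ x) := by
  rw [dotProduct_mulVec, dotProduct_comm, ← mulVec_transpose, hH.eq]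

lemma IsSymm.sq_dotProduct_mulVec_le (hH : H.IsSymm) (hpos : ∀ x, 0 ≤ x ⬝ᵥ (H *ᵥ x))
    (x y : ι → ℝ) :
    (x ⬝ᵥ (H *ᵥ y)) ^ 2 ≤ (x ⬝ᵥ (H *ᵥ x)) * (y ⬝ᵥ (H *ᵥ y)) := by
  have hquad : ∀ t : ℝ,
      0 ≤ (y ⬝ᵥ (H *ᵥ y)) * (t * t) + 2 * (x ⬝ᵥ (H *ᵥ y)) * t + x ⬝ᵥ (H *ᵥ x) := by
    intro t
    have h := hpos (x + t • y)
    simp only [mulVec_add, mulVec_smul, dotProduct_add, add_dotProduct, dotProduct_smul,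
      smul_dotProduct, smul_eq_mul, hH.dotProduct_mulVec_comm y x] at h
    linarith
  have hdiscr := discrim_le_zero hquad
  rw [discrim] at hdiscr
  linarith

lemma det_ne_zero_of_coercive [DecidableEq ι] {c : ℝ} (hc : 0 < c)
    (hH : ∀ x, c * (x ⬝ᵥ x) ≤ x ⬝ᵥ (H *ᵥ x)) : H.det ≠ 0 := by
  intro hdet
  obtain ⟨x, hx, hHx⟩ := (exists_mulVec_eq_zero_iff (M := H)).mpr hdet
  have hxx : 0 < x ⬝ᵥ x := by simpa using dotProduct_self_star_pos_iff.mpr hx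
  have h := hH x
  rw [hHx, dotProduct_zero] at h
  nlinarith

lemma mul_sqrt_dotProduct_self_le_of_mulVec_eq {c : ℝ}
    (hH : ∀ x, c * (x ⬝ᵥ x) ≤ x ⬝ᵥ (H *ᵥ x)) {w v : ι → ℝ} (hw : H *ᵥ w = v) :
    c * √(w ⬝ᵥ w) ≤ √(v ⬝ᵥ v) := by
  rw [sqrt_dotProduct_self_eq_norm, sqrt_dotProduct_self_eq_norm]
  have hcoer : c * ‖toLp 2 w‖ ^ 2 ≤ ‖toLp 2 w‖ * ‖toLp 2 v‖ := by
    have h := hH w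
    rw [hw, dotProduct_eq_inner_toLp, dotProduct_eq_inner_toLp, real_inner_self_eq_norm_sq] at h
    exact h.trans (real_inner_le_norm _ _)
  rcases (norm_nonneg (toLp 2 w)).eq_or_lt with hzero | hpos
  · rw [← hzero, mul_zero]
    exact norm_nonneg _
  · exact le_of_mul_le_mul_left (by linarith) hpos

lemma IsSymm.dotProduct_self_le_of_mulVec_eq {c : ℝ} (hH : H.IsSymm)
    (hpos : ∀ x, 0 ≤ x ⬝ᵥ (H *ᵥ x)) (hle : ∀ x, x ⬝ᵥ (H *ᵥ x) ≤ c * (x ⬝ᵥ x))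
    {w v : ι → ℝ} (hw : H *ᵥ w = v) :
    v ⬝ᵥ v ≤ c * (w ⬝ᵥ v) := by
  rcases (dotProduct_self_nonneg v).eq_or_lt with hzero | hvv
  · rw [← hzero, dotProduct_self_eq_zero.mp hzero.symm, dotProduct_zero, mul_zero]
  have hcs := hH.sq_dotProduct_mulVec_le hpos v w
  rw [hw] at hcs
  refine le_of_mul_le_mul_left ?_ hvv
  calc (v ⬝ᵥ v) * (v ⬝ᵥ v) ≤ (v ⬝ᵥ (H *ᵥ v)) * (w ⬝ᵥ v) := by rw [← sq]; exact hcs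
    _ ≤ c * (v ⬝ᵥ v) * (w ⬝ᵥ v) := mul_le_mul_of_nonneg_right (hle v) (hw ▸ hpos w)
    _ = (v ⬝ᵥ v) * (c * (w ⬝ᵥ v)) := by ring

end Matrix

theorem H_norm_bounds_general
    (n : ℕ) (g s : Fin n → ℝ) (hg : g ≠ 0)
    (c₁ c₂ : ℝ) (hc₁ : 0 < c₁) (hc : c₁ ≤ c₂)
    (H : Matrix (Fin 2) (Fin 2) ℝ) (hHsymm : H.IsSymm)
    (hH : ∀ x : Fin 2 → ℝ, c₁ * (x ⬝ᵥ x) ≤ x ⬝ᵥ (H *ᵥ x) ∧ x ⬝ᵥ (H *ᵥ x) ≤ c₂ * (x ⬝ᵥ x))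
    (α β : ℝ) (hαβ : ![α, β] = H⁻¹ *ᵥ ![g ⬝ᵥ g, -(g ⬝ᵥ s)])
    (d : Fin n → ℝ) (hd : d = (-α) • g + β • s) :
    (1/c₂) * Real.sqrt (g ⬝ᵥ g) ^ 3 ≤ Real.sqrt (d ⬝ᵥ d) ∧
    Real.sqrt (d ⬝ᵥ d) ≤ (1/c₁) * (Real.sqrt (g ⬝ᵥ g) + Real.sqrt (s ⬝ᵥ s)) * (g ⬝ᵥ g + |g ⬝ᵥ s|) := by
  set w : Fin 2 → ℝ := ![α, β]
  set v : Fin 2 → ℝ := ![g ⬝ᵥ g, -(g ⬝ᵥ s)]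
  have hHw : H *ᵥ w = v := by
    rw [hαβ, mulVec_mulVec, mul_nonsing_inv _ (det_ne_zero_of_coercive hc₁ (hH · |>.1)).isUnit,
      one_mulVec]
  have hwv : w ⬝ᵥ v = -(g ⬝ᵥ d) := by
    simp only [w, v, hd, dotProduct_add, dotProduct_smul, smul_eq_mul, cons_dotProduct_cons,
      dotProduct_of_isEmpty]
    ring
  have hgg : g ⬝ᵥ g = ‖toLp 2 g‖ ^ 2 := by
    rw [← sqrt_dotProduct_self_eq_norm, Real.sq_sqrt (dotProduct_self_nonneg g)]
  rw [sqrt_dotProduct_self_eq_norm, sqrt_dotProduct_self_eq_norm d, sqrt_dotProduct_self_eq_norm s]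
  constructor
  · have hc₂ : 0 < c₂ := hc₁.trans_le hc
    have hpos x : 0 ≤ x ⬝ᵥ (H *ᵥ x) :=
      (mul_nonneg hc₁.le (dotProduct_self_nonneg x)).trans (hH x).1
    have hdescent : ‖toLp 2 g‖ ^ 4 ≤ c₂ * -⟪toLp 2 g, toLp 2 d⟫_ℝ := by
      rw [← dotProduct_eq_inner_toLp, ← hwv, show 4 = 2 * 2 from rfl, pow_mul, ← hgg]
      exact (sq_le_dotProduct_self v 0).trans
        (hHsymm.dotProduct_self_le_of_mulVec_eq hpos (hH · |>.2) hHw)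
    rw [one_div_mul_eq_div, div_le_iff₀' hc₂]
    exact norm_pow_three_le_of_pow_four_le_neg_inner (by simpa using hg) hc₂.le hdescent
  · have hv : √(v ⬝ᵥ v) ≤ g ⬝ᵥ g + |g ⬝ᵥ s| := by
      simpa [v, Fin.sum_univ_two, abs_of_nonneg (dotProduct_self_nonneg g)] using
        sqrt_dotProduct_self_le_sum_abs v
    have hw : √(w ⬝ᵥ w) ≤ 1 / c₁ * (g ⬝ᵥ g + |g ⬝ᵥ s|) := by
      rw [one_div_mul_eq_div, le_div_iff₀' hc₁]
      exact (mul_sqrt_dotProduct_self_le_of_mulVec_eq (hH · |>.1) hHw).trans hv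
    have hα : |α| ≤ √(w ⬝ᵥ w) := Real.abs_le_sqrt (sq_le_dotProduct_self w 0)
    have hβ : |β| ≤ √(w ⬝ᵥ w) := Real.abs_le_sqrt (sq_le_dotProduct_self w 1)
    calc ‖toLp 2 d‖ ≤ |-α| * ‖toLp 2 g‖ + |β| * ‖toLp 2 s‖ := by
          rw [hd, toLp_add, toLp_smul, toLp_smul]; exact norm_smul_add_smul_le _ _ _ _
      _ ≤ √(w ⬝ᵥ w) * (‖toLp 2 g‖ + ‖toLp 2 s‖) := by rw [abs_neg, mul_add]; gcongr
      _ ≤ 1 / c₁ * (‖toLp 2 g‖ + ‖toLp 2 s‖) * (g ⬝ᵥ g + |g ⬝ᵥ s|) := by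
        rw [mul_right_comm]; gcongr

theorem H_norm_bounds
    (n : ℕ) (g s : Fin n → ℝ) (hg : g ≠ 0) (hs : s ≠ 0)
    (c₁ c₂ : ℝ) (hc₁ : 0 < c₁) (hc : c₁ ≤ c₂)
    (H : Matrix (Fin 2) (Fin 2) ℝ) (hHsymm : H.IsSymm)
    (hH : ∀ x : Fin 2 → ℝ, c₁ * (x ⬝ᵥ x) ≤ x ⬝ᵥ (H *ᵥ x) ∧ x ⬝ᵥ (H *ᵥ x) ≤ c₂ * (x ⬝ᵥ x))
    (α β : ℝ) (hαβ : ![α, β] = H⁻¹ *ᵥ ![g ⬝ᵥ g, -(g ⬝ᵥ s)])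
    (d : Fin n → ℝ) (hd : d = (-α) • g + β • s) :
    (1/c₂) * Real.sqrt (g ⬝ᵥ g) ^ 3 ≤ Real.sqrt (d ⬝ᵥ d) ∧
    Real.sqrt (d ⬝ᵥ d) ≤ (1/c₁) * (Real.sqrt (g ⬝ᵥ g) + Real.sqrt (s ⬝ᵥ s)) * (g ⬝ᵥ g + |g ⬝ᵥ s|) :=
  H_norm_bounds_general n g s hg c₁ c₂ hc₁ hc H hHsymm hH α β hαβ d hd
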